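/- Let p be a positive rational with √p irrational, and let x₁ = a₁ + b₁√p, …, xₙ = aₙ + bₙ√p (n ≥ 2) with all aᵢ, bᵢ ∈ ℚ and all xᵢ > 0. Suppose aᵢ − bᵢ√p < 0 for all i. Then for every z = e + f√p > 0 with e, f ∈ ℚ, f > 0 and |e|/f < max_{1 ≤ i ≤ n} |aᵢ|/bᵢ, the rectangle of aspect ratio z admits a diverse tiling by rectangles with aspect ratios x₁, …, xₙ. -/

import Mathlib

/-- A tiling of the rectangle `[0,1] × [0,r]` by finitely many closed
axis-parallel rectangles with positive side lengths, covering the rectangle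
and having pairwise disjoint interiors. -/
structure RectTiling (r : ℝ) where
  m : ℕ
  px : Fin m → ℝ
  py : Fin m → ℝ
  w : Fin m → ℝ
  h : Fin m → ℝ
  w_pos : ∀ k, 0 < w k
  h_pos : ∀ k, 0 < h k
  cover : (Set.Icc (0:ℝ) 1 ×ˢ Set.Icc (0:ℝ) r) =
      ⋃ k, Set.Icc (px k) (px k + w k) ×ˢ Set.Icc (py k) (py k + h k)
  disj : ∀ k l, k ≠ l →
      Disjoint ((Set.Ioo (px k) (px k + w k)) ×ˢ (Set.Ioo (py k) (py k + h k)))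
               ((Set.Ioo (px l) (px l + w l)) ×ˢ (Set.Ioo (py l) (py l + h l)))

/-- Tile `k` of the tiling `T` has aspect ratio `x` (in one of the two orientations). -/
def RectTiling.ratioOK {r : ℝ} (T : RectTiling r) (k : Fin T.m) (x : ℝ) : Prop :=
  T.h k / T.w k = x ∨ T.w k / T.h k = x

/-- The rectangle of aspect ratio `r` is tileable by rectangles with aspect
ratios among `X`. -/
def Tileable (r : ℝ) {n : ℕ} (X : Fin n → ℝ) : Prop :=
  ∃ T : RectTiling r, ∀ k, ∃ i, T.ratioOK k (X i)

/-- The rectangle of aspect ratio `r` admits a *diverse* tiling by rectangles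
with aspect ratios `X 0, …, X (n-1)`: every tile has some ratio `X i`, and for
every `i` some tile has ratio `X i`. -/
def DiverselyTileable (r : ℝ) {n : ℕ} (X : Fin n → ℝ) : Prop :=
  ∃ T : RectTiling r, (∀ k, ∃ i, T.ratioOK k (X i)) ∧ (∀ i, ∃ k, T.ratioOK k (X i))


/-!
Call `r` purely tileable by `x` if the rectangle of aspect ratio `r` can be tiled by rectangles
of aspect ratio `x` alone. Stacking and transposing tilings show that these `r` are closed under
addition and inversion, hence under multiplication by positive rationals. For `x = a + b√p` with
negative conjugate, `-a + b√p = (p b² - a²) / x` is positive too, so every positive rational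
combination of `a + b√p` and `-a + b√p` is purely tileable by `x`; these combinations are exactly
the `e + f√p` with `|e| b < f |a|`. Pick `i` with `|e| / f < |aᵢ| / bᵢ`. This open condition
survives subtracting `δ ∑ⱼ xⱼ` from `z` for a small rational `δ > 0`, so `z` is the stack of a
rectangle purely tiled by `xᵢ` and, for every `j`, a rectangle of aspect ratio `δ xⱼ`.
-/

open Set

lemma iUnion_fin_add {α : Type*} {m n : ℕ} (s : Fin (m + n) → Set α) :
    ⋃ k, s k = (⋃ i, s (Fin.castAdd n i)) ∪ ⋃ j, s (Fin.natAdd m j) := by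
  rw [← finSumFinEquiv.surjective.iUnion_comp s, iUnion_sum]
  simp only [finSumFinEquiv_apply_left, finSumFinEquiv_apply_right]

namespace RectTiling

variable {r t : ℝ}

lemma tile_subset (T : RectTiling r) (k : Fin T.m) :
    Icc (T.px k) (T.px k + T.w k) ×ˢ Icc (T.py k) (T.py k + T.h k) ⊆ Icc 0 1 ×ˢ Icc 0 r :=
  T.cover ▸ subset_iUnion_of_subset k subset_rfl

lemma py_add_h_le (T : RectTiling r) (k : Fin T.m) : T.py k + T.h k ≤ r :=
  (T.tile_subset k (a := (T.px k, T.py k + T.h k))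
    ⟨left_mem_Icc.2 (le_add_of_nonneg_right (T.w_pos k).le),
      right_mem_Icc.2 (le_add_of_nonneg_right (T.h_pos k).le)⟩).2.2

lemma py_nonneg (T : RectTiling r) (k : Fin T.m) : 0 ≤ T.py k :=
  (T.tile_subset k (a := (T.px k, T.py k))
    ⟨left_mem_Icc.2 (le_add_of_nonneg_right (T.w_pos k).le),
      left_mem_Icc.2 (le_add_of_nonneg_right (T.h_pos k).le)⟩).2.1

lemma nonempty_fin (T : RectTiling r) (hr : 0 ≤ r) : Nonempty (Fin T.m) := by
  have h : ((0 : ℝ), (0 : ℝ)) ∈ Icc (0 : ℝ) 1 ×ˢ Icc 0 r := ⟨⟨le_rfl, zero_le_one⟩, le_rfl, hr⟩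
  rw [T.cover, mem_iUnion] at h
  exact ⟨h.choose⟩

def single (r : ℝ) (hr : 0 < r) : RectTiling r where
  m := 1
  px _ := 0
  py _ := 0
  w _ := 1
  h _ := r
  w_pos _ := one_pos
  h_pos _ := hr
  cover := by simp only [zero_add, iUnion_const]
  disj k l hkl := absurd (Subsingleton.elim k l) hkl

lemma ratioOK_single (hr : 0 < r) (k : Fin (single r hr).m) : (single r hr).ratioOK k r :=
  Or.inl (div_one r)

def stack (T₁ : RectTiling r) (T₂ : RectTiling t) (hr : 0 ≤ r) (ht : 0 ≤ t) :
    RectTiling (r + t) where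
  m := T₁.m + T₂.m
  px := Fin.addCases T₁.px T₂.px
  py := Fin.addCases T₁.py (fun j => T₂.py j + r)
  w := Fin.addCases T₁.w T₂.w
  h := Fin.addCases T₁.h T₂.h
  w_pos := Fin.addCases (by simpa using T₁.w_pos) (by simpa using T₂.w_pos)
  h_pos := Fin.addCases (by simpa using T₁.h_pos) (by simpa using T₂.h_pos)
  cover := by
    have h₂ := congrArg (Prod.map id (· - r) ⁻¹' ·) T₂.cover
    simp only [preimage_iUnion, preimage_prod_map_prod, preimage_id, preimage_sub_const_Icc,
      zero_add, add_right_comm _ (T₂.h _) r] at h₂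
    rw [iUnion_fin_add]
    simp only [Fin.addCases_left, Fin.addCases_right]
    rw [← T₁.cover, ← h₂, ← prod_union, Icc_union_Icc_eq_Icc hr (by linarith), add_comm t]
  disj k l hkl := by
    induction k using Fin.addCases with
    | left j =>
      induction l using Fin.addCases with
      | left j' =>
        simpa using T₁.disj j j' (fun h => hkl (h ▸ rfl))
      | right j' =>
        simp only [Fin.addCases_left, Fin.addCases_right]
        refine disjoint_prod.2 (Or.inr ((Ioi_disjoint_Iio_of_le ?_).symm.mono
          Ioo_subset_Iio_self Ioo_subset_Ioi_self))
        linarith [T₁.py_add_h_le j, T₂.py_nonneg j']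
    | right j =>
      induction l using Fin.addCases with
      | left j' =>
        simp only [Fin.addCases_left, Fin.addCases_right]
        refine disjoint_prod.2 (Or.inr ((Ioi_disjoint_Iio_of_le ?_).mono
          Ioo_subset_Ioi_self Ioo_subset_Iio_self))
        linarith [T₁.py_add_h_le j', T₂.py_nonneg j]
      | right j' =>
        have h := (T₂.disj j j' (fun h => hkl (h ▸ rfl))).preimage (Prod.map id (· - r))
        simpa only [preimage_prod_map_prod, preimage_id, preimage_sub_const_Ioo,
          add_right_comm _ (T₂.h _) r, Fin.addCases_right] using h

lemma ratioOK_stack_castAdd (T₁ : RectTiling r) (T₂ : RectTiling t) (hr : 0 ≤ r) (ht : 0 ≤ t)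
    (j : Fin T₁.m) (x : ℝ) :
    (stack T₁ T₂ hr ht).ratioOK (Fin.castAdd T₂.m j) x ↔ T₁.ratioOK j x := by
  simp [stack, ratioOK]

lemma ratioOK_stack_natAdd (T₁ : RectTiling r) (T₂ : RectTiling t) (hr : 0 ≤ r) (ht : 0 ≤ t)
    (j : Fin T₂.m) (x : ℝ) :
    (stack T₁ T₂ hr ht).ratioOK (Fin.natAdd T₁.m j) x ↔ T₂.ratioOK j x := by
  simp [stack, ratioOK]

noncomputable def transpose (T : RectTiling r) (hr : 0 < r) : RectTiling r⁻¹ where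
  m := T.m
  px k := T.py k / r
  py k := T.px k / r
  w k := T.h k / r
  h k := T.w k / r
  w_pos k := div_pos (T.h_pos k) hr
  h_pos k := div_pos (T.w_pos k) hr
  cover := by
    have h := congrArg (Prod.swap ⁻¹' ·) (congrArg (Prod.map (· * r) (· * r) ⁻¹' ·) T.cover)
    simpa only [preimage_iUnion, preimage_prod_map_prod, preimage_swap_prod,
      preimage_mul_const_Icc₀ _ _ hr, zero_div, div_self hr.ne', one_div, add_div] using h
  disj k l hkl := by
    have h := disjoint_prod.1 (T.disj k l hkl)
    rw [disjoint_prod, ← add_div, ← add_div, ← add_div, ← add_div,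
      ← preimage_mul_const_Ioo₀ _ _ hr, ← preimage_mul_const_Ioo₀ _ _ hr,
      ← preimage_mul_const_Ioo₀ _ _ hr, ← preimage_mul_const_Ioo₀ _ _ hr]
    exact h.symm.imp (·.preimage _) (·.preimage _)

lemma ratioOK_transpose (T : RectTiling r) (hr : 0 < r) (k : Fin T.m) (x : ℝ) :
    (T.transpose hr).ratioOK k x ↔ T.ratioOK k x := by
  simp only [transpose, ratioOK, div_div_div_cancel_right₀ hr.ne']
  exact or_comm

end RectTiling

/-- `0 < r` rules out the empty tiling of the empty rectangle `[0,1] × [0,r]`, `r < 0`. -/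
def PureTileable (r x : ℝ) : Prop :=
  0 < r ∧ ∃ T : RectTiling r, ∀ k, T.ratioOK k x

namespace PureTileable

variable {r t x : ℝ}

lemma self (hx : 0 < x) : PureTileable x x :=
  ⟨hx, RectTiling.single x hx, RectTiling.ratioOK_single hx⟩

lemma add (h₁ : PureTileable r x) (h₂ : PureTileable t x) : PureTileable (r + t) x := by
  obtain ⟨hr, T₁, hT₁⟩ := h₁
  obtain ⟨ht, T₂, hT₂⟩ := h₂
  refine ⟨add_pos hr ht, T₁.stack T₂ hr.le ht.le, Fin.addCases (fun j => ?_) (fun j => ?_)⟩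
  · exact (T₁.ratioOK_stack_castAdd T₂ hr.le ht.le j x).2 (hT₁ j)
  · exact (T₁.ratioOK_stack_natAdd T₂ hr.le ht.le j x).2 (hT₂ j)

lemma inv (h : PureTileable r x) : PureTileable r⁻¹ x := by
  obtain ⟨hr, T, hT⟩ := h
  exact ⟨inv_pos.2 hr, T.transpose hr, fun k => (T.ratioOK_transpose hr k x).2 (hT k)⟩

lemma nat_mul (h : PureTileable r x) {m : ℕ} (hm : 0 < m) : PureTileable (m * r) x := by
  induction m, hm using Nat.le_induction with
  | base => simpa using h
  | succ m _ ih => simpa [add_mul] using ih.add h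

/-- `q * r = (q.den * (q.num * r)⁻¹)⁻¹`. -/
lemma rat_mul (h : PureTileable r x) {q : ℚ} (hq : 0 < q) : PureTileable (q * r) x := by
  have hnum : 0 < q.num.toNat := by have := Rat.num_pos.2 hq; omega
  have key := ((h.nat_mul hnum).inv.nat_mul q.den_pos).inv
  have hq' : (q : ℝ) = (q.num.toNat : ℝ) / q.den := by
    have hnum' : ((q.num.toNat : ℤ) : ℝ) = q.num := by
      exact_mod_cast Int.toNat_of_nonneg (Rat.num_pos.2 hq).le
    rw [Rat.cast_def q, ← hnum', Int.cast_natCast]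
  convert key using 1
  rw [hq']
  field_simp

end PureTileable

lemma PureTileable.tileable {n : ℕ} {X : Fin n → ℝ} {r : ℝ} {i : Fin n}
    (h : PureTileable r (X i)) : Tileable r X :=
  let ⟨_, T, hT⟩ := h; ⟨T, fun k => ⟨i, hT k⟩⟩

lemma pos_of_add_mul_pos_of_sub_mul_neg {a b s : ℝ} (hs : 0 ≤ s) (h₁ : 0 < a + b * s)
    (h₂ : a - b * s < 0) : 0 < b :=
  pos_of_mul_pos_left (by linarith) hs

/-- `e + f s = u x + v y` with `y = -a + b s = (p b² - a²) / x` and `u, v = (f / b ± e / a) / 2`,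
which are positive rationals when `|e| b < f |a|`. -/
theorem pureTileable_of_abs_mul_lt {p : ℚ} {s : ℝ} (hs : 0 ≤ s) (hsp : s ^ 2 = p)
    {a b e f : ℚ} (hx : 0 < a + b * s) (hconj : a - b * s < 0) (h : |e| * b < f * |a|) :
    PureTileable (e + f * s) (a + b * s) := by
  have hb : 0 < b := by exact_mod_cast pos_of_add_mul_pos_of_sub_mul_neg hs hx hconj
  have ha : a ≠ 0 := by
    rintro rfl
    simp only [abs_zero, mul_zero] at h
    linarith [mul_nonneg (abs_nonneg e) hb.le]
  have hea : |e / a| < f / b := by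
    rwa [abs_div, div_lt_div_iff₀ (abs_pos.2 ha) hb]
  obtain ⟨hu, hv⟩ : 0 < f / b + e / a ∧ 0 < f / b - e / a := by
    rw [abs_lt] at hea
    constructor <;> linarith
  have hprod : ((p * b ^ 2 - a ^ 2 : ℚ) : ℝ) = (a + b * s) * (-a + b * s) := by
    push_cast
    rw [← hsp]
    ring
  have hc : 0 < p * b ^ 2 - a ^ 2 := by
    have := mul_pos hx (show (0 : ℝ) < -a + b * s by linarith)
    exact_mod_cast hprod ▸ this
  have hy : ((p * b ^ 2 - a ^ 2 : ℚ) : ℝ) * (a + b * s)⁻¹ = -a + b * s := by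
    rw [hprod]
    field_simp
  convert ((PureTileable.self hx).rat_mul (half_pos hu)).add
    ((PureTileable.self hx).inv.rat_mul (mul_pos (half_pos hv) hc)) using 1
  rw [Rat.cast_mul _ (p * b ^ 2 - a ^ 2), mul_assoc, hy]
  push_cast
  field_simp
  ring

lemma exists_pos_abs_sub_mul_lt {e f c d : ℚ} (A B : ℚ) (h : |e| * c < f * d) :
    ∃ δ : ℚ, 0 < δ ∧ |e - δ * A| * c < (f - δ * B) * d := by
  have hcont : Continuous fun δ : ℚ => (f - δ * B) * d - |e - δ * A| * c := by fun_prop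
  have hev := (hcont.tendsto 0).eventually_const_lt (u := 0) (by simpa using h)
  obtain ⟨δ, hδ, hδ'⟩ := hev.exists_gt
  exact ⟨δ, hδ, by linarith⟩

lemma exists_tiling_add_sum {n : ℕ} {X : Fin n → ℝ} {w : ℝ} (hw : 0 ≤ w) (hT : Tileable w X)
    {r : Fin n → ℝ} (hr : ∀ i, PureTileable (r i) (X i)) (F : Finset (Fin n)) :
    ∃ T : RectTiling (w + ∑ i ∈ F, r i),
      (∀ k, ∃ i, T.ratioOK k (X i)) ∧ ∀ i ∈ F, ∃ k, T.ratioOK k (X i) := by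
  induction F using Finset.induction_on with
  | empty =>
    obtain ⟨T, hT⟩ := hT
    rw [Finset.sum_empty, add_zero]
    exact ⟨T, hT, by simp⟩
  | @insert i F hi ih =>
    obtain ⟨T, hT, hTF⟩ := ih
    obtain ⟨hri, B, hB⟩ := hr i
    have hwF : 0 ≤ w + ∑ j ∈ F, r j := add_nonneg hw (F.sum_nonneg fun j _ => (hr j).1.le)
    rw [Finset.sum_insert hi, add_comm (r i), ← add_assoc]
    refine ⟨T.stack B hwF hri.le, fun k => ?_, fun j hj => ?_⟩
    · induction k using Fin.addCases with
      | left k =>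
        obtain ⟨j, hj⟩ := hT k
        exact ⟨j, (T.ratioOK_stack_castAdd B _ _ k _).2 hj⟩
      | right k => exact ⟨i, (T.ratioOK_stack_natAdd B _ _ k _).2 (hB k)⟩
    obtain rfl | hj := Finset.mem_insert.1 hj
    · obtain ⟨k⟩ := B.nonempty_fin hri.le
      exact ⟨_, (T.ratioOK_stack_natAdd B _ _ k _).2 (hB k)⟩
    · obtain ⟨k, hk⟩ := hTF j hj
      exact ⟨_, (T.ratioOK_stack_castAdd B _ _ k _).2 hk⟩

theorem diverse_tiling_exists_neg_conj_case (p : ℚ) (hp : 0 < p)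
    (n : ℕ) (hn : 2 ≤ n) (a b : Fin n → ℚ) (X : Fin n → ℝ)
    (hX : ∀ i, X i = (a i : ℝ) + (b i : ℝ) * Real.sqrt p)
    (hXpos : ∀ i, 0 < X i)
    (hconj : ∀ i, (a i : ℝ) - (b i : ℝ) * Real.sqrt p < 0)
    (e f : ℚ) (z : ℝ) (hz : z = (e : ℝ) + (f : ℝ) * Real.sqrt p)
    (hf : 0 < f)
    (he : |e| / f < Finset.univ.sup' ⟨⟨0, by omega⟩, Finset.mem_univ _⟩
        (fun i => |a i| / b i)) :
    DiverselyTileable z X := by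
  have hs := Real.sqrt_nonneg (p : ℝ)
  have hsp := Real.sq_sqrt (show (0 : ℝ) ≤ p by exact_mod_cast hp.le)
  obtain ⟨i₀, -, hi₀⟩ := (Finset.lt_sup'_iff _).1 he
  have hb : 0 < b i₀ := by
    exact_mod_cast pos_of_add_mul_pos_of_sub_mul_neg hs (hX i₀ ▸ hXpos i₀) (hconj i₀)
  have hcone : |e| * b i₀ < f * |a i₀| := by
    rw [div_lt_div_iff₀ hf hb] at hi₀
    linarith
  obtain ⟨δ, hδ, hδcone⟩ := exists_pos_abs_sub_mul_lt (∑ i, a i) (∑ i, b i) hcone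
  have hw := pureTileable_of_abs_mul_lt hs hsp (hX i₀ ▸ hXpos i₀) (hconj i₀) hδcone
  rw [← hX] at hw
  obtain ⟨T, hT, hTdiv⟩ := exists_tiling_add_sum hw.1.le hw.tileable
    (fun i => (PureTileable.self (hXpos i)).rat_mul hδ) Finset.univ
  have hz' : z = (↑(e - δ * ∑ i, a i) + ↑(f - δ * ∑ i, b i) * Real.sqrt p)
      + ∑ i, (δ : ℝ) * X i := by
    simp only [hz, hX]
    push_cast
    simp only [mul_add, Finset.sum_add_distrib, ← Finset.mul_sum, ← Finset.sum_mul]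
    ring
  exact hz' ▸ ⟨T, hT, fun i => hTdiv i (Finset.mem_univ i)⟩
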